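/- Assume a_1 ≤ a_2 ≤ … ≤ a_m ≤ 0 < a_{m+1} ≤ … ≤ a_{n−1} for some 1 ≤ m < n, and assume a_1 < 0. Then for every composition λ of d with n parts, the element (∏_{i=1}^{n−1} x_i^{λ_i})·y^{d − d a_1 + λ_n} of K does not belong to A. -/

import Mathlib

open MvPolynomial Finset

noncomputable section

/-- `Kk p` is the fraction field of `ℂ[x_1,…,x_p, y]`, a polynomial ring in `p+1` variables
(so the paper's `n` is `p+1`). -/
abbrev Kk (p : ℕ) := FractionRing (MvPolynomial (Fin (p+1)) ℂ)

variable {p : ℕ}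

/-- the images `x_i` (for `i = 1, …, p`) in the fraction field -/
def xv (i : Fin p) : Kk p :=
  algebraMap (MvPolynomial (Fin (p+1)) ℂ) (Kk p) (X i.castSucc)

/-- the image of `y` in the fraction field -/
def yv : Kk p :=
  algebraMap (MvPolynomial (Fin (p+1)) ℂ) (Kk p) (X (Fin.last p))

/-- the coordinate ring `A = ℂ[x_1 y^{-a_1}, …, x_{n-1} y^{-a_{n-1}}, y^{-1}]`, i.e. the
ℂ-subalgebra of `K` generated by the `x_i y^{-a_i}` and `y^{-1}`. -/
def Asub (a : Fin p → ℤ) : Subalgebra ℂ (Kk p) :=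
  Algebra.adjoin ℂ ((Set.range fun i : Fin p => xv i * yv ^ (-(a i) : ℤ)) ∪ {yv⁻¹})

/-
Give `y` weight `1` and `x_i` weight `a_i`. The generators `x_i y^{-a_i}` and `y^{-1}` of `A` have
weight `0` and `-1`, so every element of `A` is `g / y^N` with all monomials of `g` of weight at
most `N`; in particular a monomial lying in `A` has weight `≤ 0`. Since `a_1` is the smallest of
the `a_i`, the weight of `x^λ y^{d - d a_1 + λ_n}` is at least `d + λ_n (1 - a_1) > 0`.
-/

namespace MvPolynomial

variable {σ R : Type*} [CommRing R]

def WeightedDegreeLE (w : σ → ℤ) (N : ℤ) (g : MvPolynomial σ R) : Prop :=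
  ∀ c ∈ g.support, Finsupp.weight w c ≤ N

namespace WeightedDegreeLE

variable {w : σ → ℤ} {M N : ℤ} {f g : MvPolynomial σ R}

theorem mono (hf : WeightedDegreeLE w M f) (hMN : M ≤ N) : WeightedDegreeLE w N f :=
  fun c hc => (hf c hc).trans hMN

theorem add (hf : WeightedDegreeLE w N f) (hg : WeightedDegreeLE w N g) :
    WeightedDegreeLE w N (f + g) := by
  classical
  intro c hc
  rcases Finset.mem_union.mp (support_add hc) with hc | hc
  exacts [hf c hc, hg c hc]

theorem mul (hf : WeightedDegreeLE w M f) (hg : WeightedDegreeLE w N g) :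
    WeightedDegreeLE w (M + N) (f * g) := by
  classical
  intro c hc
  obtain ⟨c₁, hc₁, c₂, hc₂, rfl⟩ := Finset.mem_add.mp (support_mul f g hc)
  rw [map_add]
  exact add_le_add (hf c₁ hc₁) (hg c₂ hc₂)

end WeightedDegreeLE

theorem weightedDegreeLE_monomial {w : σ → ℤ} {N : ℤ} {c : σ →₀ ℕ} (r : R)
    (hc : Finsupp.weight w c ≤ N) : WeightedDegreeLE w N (monomial c r) := by
  classical
  intro c' hc'
  rwa [Finset.mem_singleton.mp (support_monomial_subset hc')]

theorem weightedDegreeLE_X_pow (w : σ → ℤ) (s : σ) (n : ℕ) :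
    WeightedDegreeLE w (n * w s) (X s ^ n : MvPolynomial σ R) := by
  rw [X_pow_eq_monomial]
  exact weightedDegreeLE_monomial 1 (by rw [Finsupp.weight_single, nsmul_eq_mul])

local notation "K" => FractionRing (MvPolynomial σ R)

local notation "ι" => algebraMap (MvPolynomial σ R) K

def weightNonposSubalgebra (w : σ → ℤ) (s : σ) : Subalgebra R K where
  carrier := {z | ∃ N : ℕ, ∃ g : MvPolynomial σ R, WeightedDegreeLE w (N * w s) g ∧
    ι g = z * ι (X s) ^ N}
  mul_mem' := by
    rintro z₁ z₂ ⟨N₁, g₁, hg₁, he₁⟩ ⟨N₂, g₂, hg₂, he₂⟩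
    refine ⟨N₁ + N₂, g₁ * g₂, ?_, ?_⟩
    · exact (hg₁.mul hg₂).mono (le_of_eq (by push_cast; ring))
    · rw [map_mul, he₁, he₂]; ring
  add_mem' := by
    rintro z₁ z₂ ⟨N₁, g₁, hg₁, he₁⟩ ⟨N₂, g₂, hg₂, he₂⟩
    refine ⟨N₁ + N₂, g₁ * X s ^ N₂ + g₂ * X s ^ N₁, ?_, ?_⟩
    · have h₁ := hg₁.mul (weightedDegreeLE_X_pow w s N₂)
      have h₂ := hg₂.mul (weightedDegreeLE_X_pow w s N₁)
      rw [add_comm] at h₂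
      exact (h₁.add h₂).mono (le_of_eq (by push_cast; ring))
    · simp only [map_add, map_mul, map_pow, he₁, he₂]; ring
  algebraMap_mem' r := ⟨0, C r, weightedDegreeLE_monomial r (by simp), by
    rw [pow_zero, mul_one]; rfl⟩

variable {w : σ → ℤ} {s : σ}

theorem algebraMap_mem_weightNonposSubalgebra_iff {g : MvPolynomial σ R} :
    ι g ∈ weightNonposSubalgebra w s ↔ WeightedDegreeLE w 0 g := by
  refine ⟨fun ⟨N, g', hg', he⟩ c hc => ?_, fun hg => ⟨0, g, hg.mono (by simp), by simp⟩⟩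
  have hg'_eq : g * X s ^ N = g' := by
    apply IsFractionRing.injective (MvPolynomial σ R) K
    rw [he, map_mul, map_pow]
  have hcoeff : coeff (c + Finsupp.single s N) g' ≠ 0 := by
    rwa [← hg'_eq, X_pow_eq_monomial, coeff_mul_monomial, mul_one, ← mem_support_iff]
  have := hg' _ (mem_support_iff.mpr hcoeff)
  rw [map_add, Finsupp.weight_single, nsmul_eq_mul] at this
  linarith

theorem monomial_mul_zpow_mem_weightNonposSubalgebra [IsDomain R] {c : σ →₀ ℕ} {e : ℤ}
    (hce : Finsupp.weight w c + e * w s ≤ 0) :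
    ι (monomial c 1) * ι (X s) ^ e ∈ weightNonposSubalgebra w s := by
  refine ⟨(-e).toNat, monomial (c + Finsupp.single s e.toNat) 1, ?_, ?_⟩
  · refine weightedDegreeLE_monomial 1 ?_
    rw [map_add, Finsupp.weight_single, nsmul_eq_mul]
    have : (e.toNat : ℤ) * w s - (-e).toNat * w s = e * w s := by
      rw [← sub_mul, Int.toNat_sub_toNat_neg]
    linarith
  · have hy : ι (X s : MvPolynomial σ R) ≠ 0 :=
      (map_ne_zero_iff _ (IsFractionRing.injective _ K)).mpr (X_ne_zero s)
    rw [monomial_add_single, map_mul, map_pow, mul_assoc, ← zpow_natCast, ← zpow_natCast,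
      ← zpow_add₀ hy]
    congr 2
    omega

end MvPolynomial

open MvPolynomial

theorem weight_snoc (a : Fin p → ℤ) (b : ℤ) (c : Fin (p+1) →₀ ℕ) :
    Finsupp.weight (Fin.snoc a b : Fin (p+1) → ℤ) c =
      ∑ i : Fin p, (c i.castSucc : ℤ) * a i + c (Fin.last p) * b := by
  simp [Finsupp.weight_eq_sum, Fin.sum_univ_castSucc]

theorem algebraMap_monomial_eq_prod_xv_mul_yv (lam : Fin (p+1) → ℕ) :
    algebraMap _ (Kk p) (monomial (Finsupp.equivFunOnFinite.symm lam) (1 : ℂ)) =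
      (∏ i : Fin p, xv i ^ lam i.castSucc) * yv ^ lam (Fin.last p) := by
  rw [monomial_eq, C_1, one_mul, Finsupp.prod_fintype _ _ (fun _ => pow_zero _), map_prod,
    Fin.prod_univ_castSucc]
  simp [xv, yv]

theorem Asub_le_weightNonposSubalgebra (a : Fin p → ℤ) :
    Asub a ≤ weightNonposSubalgebra (Fin.snoc a 1 : Fin (p+1) → ℤ) (Fin.last p) := by
  refine Algebra.adjoin_le ?_
  rintro _ (⟨i, rfl⟩ | rfl)
  · have := monomial_mul_zpow_mem_weightNonposSubalgebra (R := ℂ)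
      (w := (Fin.snoc a 1 : Fin (p+1) → ℤ)) (s := Fin.last p)
      (c := Finsupp.single i.castSucc 1) (e := -a i) (by simp [Finsupp.weight_single])
    simpa [xv, yv, ← X_pow_eq_monomial] using this
  · have := monomial_mul_zpow_mem_weightNonposSubalgebra (R := ℂ)
      (w := (Fin.snoc a 1 : Fin (p+1) → ℤ)) (s := Fin.last p) (c := 0) (e := -1) (by simp)
    simpa [yv] using this

theorem monomial_not_mem_Asub_general (p d : ℕ) (hp : 1 ≤ p) (hd : 1 ≤ d)
    (a : Fin p → ℤ) (hsort : Monotone a)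
    (ha1 : a ⟨0, hp⟩ < 0)
    (lam : Fin (p+1) → ℕ) (hlam : ∑ i, lam i = d) :
    (∏ i : Fin p, xv i ^ lam i.castSucc) *
        yv ^ ((d : ℤ) - (d : ℤ) * a ⟨0, hp⟩ + (lam (Fin.last p) : ℤ)) ∉ Asub a := by
  intro hmem
  set a₁ := a ⟨0, hp⟩
  obtain ⟨k, hk⟩ : ∃ k : ℕ, (k : ℤ) = d - d * a₁ := ⟨_, Int.toNat_of_nonneg (by nlinarith)⟩
  set c := Finsupp.equivFunOnFinite.symm lam + Finsupp.single (Fin.last p) k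
  have htarget : (∏ i : Fin p, xv i ^ lam i.castSucc) *
      yv ^ ((d : ℤ) - d * a₁ + lam (Fin.last p)) = algebraMap _ (Kk p) (monomial c (1 : ℂ)) := by
    rw [monomial_add_single, map_mul, algebraMap_monomial_eq_prod_xv_mul_yv, ← hk, ← Nat.cast_add,
      zpow_natCast, add_comm k, pow_add, mul_assoc, map_pow]
    rfl
  have hc : Finsupp.weight (Fin.snoc a 1 : Fin (p+1) → ℤ) c ≤ 0 :=
    algebraMap_mem_weightNonposSubalgebra_iff.mp
      (Asub_le_weightNonposSubalgebra a (htarget ▸ hmem)) c (by simp [support_monomial])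
  have hweight : Finsupp.weight (Fin.snoc a 1 : Fin (p+1) → ℤ) c =
      ∑ i : Fin p, (lam i.castSucc : ℤ) * a i + lam (Fin.last p) + k := by
    simp [c, weight_snoc, add_assoc]
  have hmin : a₁ * ∑ i : Fin p, (lam i.castSucc : ℤ) ≤ ∑ i : Fin p, (lam i.castSucc : ℤ) * a i := by
    rw [Finset.mul_sum]
    exact Finset.sum_le_sum fun i _ =>
      (mul_comm _ _).trans_le (mul_le_mul_of_nonneg_left (hsort (Nat.zero_le _)) (by positivity))
  have hsum : ∑ i : Fin p, (lam i.castSucc : ℤ) + lam (Fin.last p) = d := by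
    rw [← hlam, Fin.sum_univ_castSucc]; push_cast; rfl
  nlinarith

/-- Under the ordering assumption `a_1 ≤ ⋯ ≤ a_m ≤ 0 < a_{m+1} ≤ ⋯ ≤ a_{n-1}` with
`1 ≤ m < n` and `a_1 < 0`, for every composition `λ` of `d` the element
`(∏_{i<n} x_i^{λ_i}) y^{d - d a_1 + λ_n}` does not lie in `A`.
(Here the paper's `n` is `p+1`, and indices `1,…,n-1` correspond to `Fin p`.) -/
theorem monomial_not_mem_Asub (p d m : ℕ) (hp : 1 ≤ p) (hd : 1 ≤ d)
    (hm : 1 ≤ m) (hmn : m < p + 1)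
    (a : Fin p → ℤ) (hsort : Monotone a)
    (ha1 : a ⟨0, hp⟩ < 0)
    (hnonpos : ∀ i : Fin p, (i : ℕ) < m → a i ≤ 0)
    (hpos : ∀ i : Fin p, m ≤ (i : ℕ) → 0 < a i)
    (lam : Fin (p+1) → ℕ) (hlam : ∑ i, lam i = d) :
    (∏ i : Fin p, xv i ^ lam i.castSucc) *
        yv ^ ((d : ℤ) - (d : ℤ) * a ⟨0, hp⟩ + (lam (Fin.last p) : ℤ)) ∉ Asub a :=
  monomial_not_mem_Asub_general p d hp hd a hsort ha1 lam hlam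

end
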